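/- Let G be a labeled cuboid graph with iso-level c ∈ (0,1), realized geometrically on a cuboid in ℝ³. Then: on the edges of a face all of whose vertices are disperse, or all of whose vertices are continuous, there is no iso-point; on the edges of a singular face there is exactly one iso-point, namely its iso-node; on the edges of a trivial L-face there are exactly two iso-points, namely its two iso-nodes; and on the edges of a non-trivial L-face there are exactly four iso-points if the face contains no iso-node, and exactly three iso-points if it contains an iso-node. -/

import Mathlib

/-- The eight vertices of the combinatorial 3-cube. -/
abbrev Vtx : Type := Fin 2 × Fin 2 × Fin 2

/-- The `i`-th coordinate of a cube vertex. -/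
def coord (i : Fin 3) (p : Vtx) : Fin 2 := ![p.1, p.2.1, p.2.2] i

/-- Number of coordinates in which two vertices differ. -/
def diffCount (p q : Vtx) : ℕ :=
  (Finset.univ.filter (fun i : Fin 3 => coord i p ≠ coord i q)).card

/-- Two vertices are adjacent if they differ in exactly one coordinate. -/
def Adj (p q : Vtx) : Prop := diffCount p q = 1

/-- Two vertices are diagonal if they differ in exactly two coordinates. -/
def Diag (p q : Vtx) : Prop := diffCount p q = 2

/-- Two vertices are antipodal if they differ in all three coordinates. -/
def Antipodal (p q : Vtx) : Prop := diffCount p q = 3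

/-- A face of the cube: the set of four vertices with one fixed coordinate. -/
def IsFace (s : Finset Vtx) : Prop :=
  ∃ (i : Fin 3) (v : Fin 2), s = Finset.univ.filter (fun p => coord i p = v)

/-- An L-face: a face with exactly two disperse and two continuous vertices
in which the two disperse vertices are not adjacent. -/
def IsLFace (F : Vtx → ℝ) (c : ℝ) (s : Finset Vtx) : Prop :=
  IsFace s ∧ ∃ p q, p ∈ s ∧ q ∈ s ∧ p ≠ q ∧ c < F p ∧ c < F q ∧ ¬ Adj p q ∧
    ∀ r ∈ s, r ≠ p → r ≠ q → F r ≤ c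

/-- A trivial L-face: an L-face whose two continuous vertices are both iso-nodes. -/
def IsTrivialLFace (F : Vtx → ℝ) (c : ℝ) (s : Finset Vtx) : Prop :=
  IsLFace F c s ∧ ∀ r ∈ s, F r ≤ c → F r = c

/-- A singular face: a face with three disperse vertices whose fourth vertex is an iso-node. -/
def IsSingularFace (F : Vtx → ℝ) (c : ℝ) (s : Finset Vtx) : Prop :=
  IsFace s ∧ ∃ p ∈ s, F p = c ∧ ∀ q ∈ s, q ≠ p → c < F q

/-- A regular face: a face that is not an L-face, not a singular face, and has
neither all vertices disperse nor all vertices continuous. -/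
def IsRegularFace (F : Vtx → ℝ) (c : ℝ) (s : Finset Vtx) : Prop :=
  IsFace s ∧ ¬ IsLFace F c s ∧ ¬ IsSingularFace F c s ∧
    ¬ (∀ p ∈ s, c < F p) ∧ ¬ (∀ p ∈ s, F p ≤ c)

/-- `D(G)`: number of disperse vertices. -/
noncomputable def DG (F : Vtx → ℝ) (c : ℝ) : ℕ := Set.ncard {p : Vtx | c < F p}

/-- Regularity of a labeled cuboid graph. -/
def RegularGraph (F : Vtx → ℝ) (c : ℝ) : Prop :=
  (¬ ∀ p, c < F p) ∧ (¬ ∀ p, F p ≤ c) ∧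
  (∀ p, F p = c → ¬ ∀ q, Adj p q → c < F q) ∧
  (¬ ∃ p q, Adj p q ∧ F p = c ∧ F q = c ∧
      5 ≤ Set.ncard {r : Vtx | r ≠ p ∧ r ≠ q ∧ c < F r}) ∧
  (¬ ∃ s : Finset Vtx, IsFace s ∧ (∀ p ∈ s, F p = c) ∧ ∀ p, p ∉ s → c < F p)

/-- An S1-subgraph: a disperse vertex all of whose neighbors are continuous. -/
def IsS1 (F : Vtx → ℝ) (c : ℝ) (p : Vtx) : Prop :=
  c < F p ∧ ∀ q, Adj p q → F q ≤ c

/-- An S2-subgraph: two adjacent disperse vertices whose remaining neighbors are continuous. -/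
def IsS2 (F : Vtx → ℝ) (c : ℝ) (p q : Vtx) : Prop :=
  Adj p q ∧ c < F p ∧ c < F q ∧
    (∀ r, Adj p r → r ≠ q → F r ≤ c) ∧ (∀ r, Adj q r → r ≠ p → F r ≤ c)

/-- An S3-subgraph: a vertex with value `< c` all of whose neighbors are disperse. -/
def IsS3 (F : Vtx → ℝ) (c : ℝ) (p : Vtx) : Prop :=
  F p < c ∧ ∀ q, Adj p q → c < F q

/-- Reducibility of a labeled cuboid graph. -/
def Reducible (F : Vtx → ℝ) (c : ℝ) : Prop :=
  RegularGraph F c ∧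
    ((∃ s, IsLFace F c s) ∨ (DG F c = 2 ∧ ∃ p, IsS1 F c p) ∨
      (DG F c = 6 ∧ ∃ p, IsS3 F c p))

/-- Irreducibility of a labeled cuboid graph. -/
def IrreducibleGraph (F : Vtx → ℝ) (c : ℝ) : Prop :=
  RegularGraph F c ∧ ¬ Reducible F c

/-- Geometric position of a cube vertex on the cuboid `[a₁,b₁]×[a₂,b₂]×[a₃,b₃]`. -/
def vpos (a b : Fin 3 → ℝ) (p : Vtx) : Fin 3 → ℝ :=
  fun i => if coord i p = 0 then a i else b i

/-- `x` is an iso-point on the cuboid edge joining the vertices `p` and `q`. -/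
def IsIsoPointOn (F : Vtx → ℝ) (c : ℝ) (a b : Fin 3 → ℝ) (p q : Vtx)
    (x : Fin 3 → ℝ) : Prop :=
  Adj p q ∧ ((F p ≤ c ∧ c < F q) ∨ (F q ≤ c ∧ c < F p)) ∧
    ∃ t : ℝ, t ∈ Set.Icc (0:ℝ) 1 ∧ x = vpos a b p + t • (vpos a b q - vpos a b p) ∧
      F p + t * (F q - F p) = c

/-- The set of iso-points lying on the edges of the face `s`. -/
def isoPtsOnFace (F : Vtx → ℝ) (c : ℝ) (a b : Fin 3 → ℝ) (s : Finset Vtx) :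
    Set (Fin 3 → ℝ) :=
  {x | ∃ p q, p ∈ s ∧ q ∈ s ∧ IsIsoPointOn F c a b p q x}

section Aux

instance (p q : Vtx) : Decidable (Adj p q) := by unfold Adj; infer_instance

lemma face_adj_exists : ∀ (i : Fin 3) (v : Fin 2) (p : Vtx),
    coord i p = v → ∃ q : Vtx, coord i q = v ∧ q ≠ p ∧ Adj p q := by decide

lemma face_adj_of_diag : ∀ (i : Fin 3) (v : Fin 2) (x y z : Vtx),
    coord i x = v → coord i y = v → coord i z = v →
    x ≠ y → ¬ Adj x y → z ≠ x → z ≠ y → Adj z x := by decide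

lemma adj_exists_dir : ∀ p q : Vtx, Adj p q → ∃ i, coord i p ≠ coord i q := by decide

lemma adj_dir_unique : ∀ p q : Vtx, Adj p q → ∀ i j : Fin 3,
    coord i p ≠ coord i q → coord j p ≠ coord j q → i = j := by decide

lemma vtx_ext : ∀ p q : Vtx, (∀ i, coord i p = coord i q) → p = q := by decide

lemma fin2_eq_of_ne : ∀ x y z : Fin 2, x ≠ z → y ≠ z → x = y := by decide

lemma exists_diff_coord : ∀ p q : Vtx, p ≠ q → ∃ i, coord i p ≠ coord i q := by decide

set_option synthInstance.maxSize 2000 in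
set_option synthInstance.maxHeartbeats 1000000 in
lemma face_other_two : ∀ (i : Fin 3) (v : Fin 2) (x y : Vtx),
    coord i x = v → coord i y = v → x ≠ y → ¬ Adj x y →
    ∃ z w : Vtx, coord i z = v ∧ coord i w = v ∧ z ≠ w ∧ z ≠ x ∧ z ≠ y ∧ w ≠ x ∧ w ≠ y ∧
      ∀ u : Vtx, coord i u = v → u = x ∨ u = y ∨ u = z ∨ u = w := by decide

/-- The unique iso-point of a crossing edge. -/
noncomputable def ept (F : Vtx → ℝ) (c : ℝ) (a b : Fin 3 → ℝ) (p q : Vtx) : Fin 3 → ℝ :=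
  vpos a b p + ((c - F p)/(F q - F p)) • (vpos a b q - vpos a b p)

variable {F : Vtx → ℝ} {c : ℝ} {a b : Fin 3 → ℝ} {p q r p1 q1 p2 q2 : Vtx} {x : Fin 3 → ℝ}

lemma cross_ne (h : (F p ≤ c ∧ c < F q) ∨ (F q ≤ c ∧ c < F p)) : F q - F p ≠ 0 := by
  rcases h with ⟨h1, h2⟩ | ⟨h1, h2⟩ <;> intro h <;> linarith

lemma iso_iff :
    IsIsoPointOn F c a b p q x ↔ Adj p q ∧ ((F p ≤ c ∧ c < F q) ∨ (F q ≤ c ∧ c < F p)) ∧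
      x = ept F c a b p q := by
  constructor
  · rintro ⟨hadj, hcr, t, ht, hx, hteq⟩
    have hne := cross_ne hcr
    have htval : t = (c - F p) / (F q - F p) := by field_simp; linarith
    exact ⟨hadj, hcr, by rw [hx, htval]; rfl⟩
  · rintro ⟨hadj, hcr, hx⟩
    have hne := cross_ne hcr
    refine ⟨hadj, hcr, (c - F p) / (F q - F p), ⟨?_, ?_⟩, hx, by field_simp; ring⟩
    · rcases hcr with ⟨h1, h2⟩ | ⟨h1, h2⟩
      · exact div_nonneg (by linarith) (by linarith)
      · have hrw : (c - F p) / (F q - F p) = (F p - c) / (F p - F q) := by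
          rw [div_eq_div_iff (by linarith) (by linarith)]; ring
        rw [hrw]; exact div_nonneg (by linarith) (by linarith)
    · rcases hcr with ⟨h1, h2⟩ | ⟨h1, h2⟩
      · rw [div_le_one (by linarith)]; linarith
      · have hrw : (c - F p) / (F q - F p) = (F p - c) / (F p - F q) := by
          rw [div_eq_div_iff (by linarith) (by linarith)]; ring
        rw [hrw, div_le_one (by linarith)]; linarith

lemma ept_symm (hne : F q - F p ≠ 0) : ept F c a b p q = ept F c a b q p := by
  have hne' : F p - F q ≠ 0 := fun h => hne (by linarith [sub_eq_zero.mp h])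
  funext i
  simp only [ept, Pi.add_apply, Pi.smul_apply, Pi.sub_apply, smul_eq_mul]
  field_simp
  ring

lemma ept_of_eq (h : F p = c) : ept F c a b p q = vpos a b p := by
  simp [ept, h]

lemma vpos_apply_mem (i : Fin 3) : vpos a b p i = a i ∨ vpos a b p i = b i := by
  unfold vpos; split <;> simp

lemma vpos_eq_coord (i : Fin 3) (h : coord i p = coord i q) :
    vpos a b p i = vpos a b q i := by
  unfold vpos; rw [h]

lemma vpos_ne (hab : ∀ i, a i < b i) {i : Fin 3}
    (hi : coord i p ≠ coord i q) : vpos a b p i ≠ vpos a b q i := by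
  unfold vpos
  by_cases h1 : coord i p = 0 <;> by_cases h2 : coord i q = 0
  · exact absurd (h1.trans h2.symm) hi
  · simpa [h1, h2] using (hab i).ne
  · simpa [h1, h2] using (hab i).ne'
  · exact absurd (fin2_eq_of_ne _ _ 0 h1 h2) hi

lemma vpos_ne_fun (hab : ∀ i, a i < b i) (h : p ≠ q) : vpos a b p ≠ vpos a b q := by
  obtain ⟨i, hi⟩ := exists_diff_coord p q h
  exact fun he => vpos_ne hab hi (congrFun he i)

lemma ept_apply_of_coord_eq (i : Fin 3) (h : coord i p = coord i q) :
    ept F c a b p q i = vpos a b p i := by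
  simp [ept, vpos_eq_coord i h]

lemma ept_apply_mem_Ioo (hab : ∀ i, a i < b i) (i : Fin 3) (h : coord i p ≠ coord i q)
    (hcr : (F p < c ∧ c < F q) ∨ (F q < c ∧ c < F p)) :
    ept F c a b p q i ∈ Set.Ioo (a i) (b i) := by
  set t := (c - F p) / (F q - F p) with htdef
  have ht : t ∈ Set.Ioo (0:ℝ) 1 := by
    rcases hcr with ⟨h1, h2⟩ | ⟨h1, h2⟩
    · exact ⟨div_pos (by linarith) (by linarith),
        (div_lt_one (by linarith)).mpr (by linarith)⟩
    · have hrw : (c - F p) / (F q - F p) = (F p - c) / (F p - F q) := by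
        rw [div_eq_div_iff (by linarith) (by linarith)]; ring
      rw [htdef, hrw]
      exact ⟨div_pos (by linarith) (by linarith),
        (div_lt_one (by linarith)).mpr (by linarith)⟩
  have hval : ept F c a b p q i = vpos a b p i + t * (vpos a b q i - vpos a b p i) := rfl
  have hab' := hab i
  rcases vpos_apply_mem (p := p) (a := a) (b := b) i with h1 | h1 <;>
    rcases vpos_apply_mem (p := q) (a := a) (b := b) i with h2 | h2
  · exact absurd (h1.trans h2.symm) (vpos_ne hab h)
  · rw [hval, h1, h2]; constructor <;> nlinarith [ht.1, ht.2]
  · rw [hval, h1, h2]; constructor <;> nlinarith [ht.1, ht.2]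
  · exact absurd (h1.trans h2.symm) (vpos_ne hab h)

lemma ept_ne_vpos (hab : ∀ i, a i < b i) (hadj : Adj p q)
    (hcr : (F p < c ∧ c < F q) ∨ (F q < c ∧ c < F p)) (r : Vtx) :
    ept F c a b p q ≠ vpos a b r := by
  obtain ⟨i, hi⟩ := adj_exists_dir p q hadj
  intro h
  have hm := ept_apply_mem_Ioo hab i hi hcr
  rw [h] at hm
  rcases vpos_apply_mem (p := r) (a := a) (b := b) i with h2 | h2 <;> rw [h2] at hm
  · exact lt_irrefl _ hm.1
  · exact lt_irrefl _ hm.2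

lemma ept_eq_ept (hab : ∀ i, a i < b i) (h1 : Adj p1 q1) (h2 : Adj p2 q2)
    (hc1 : (F p1 < c ∧ c < F q1) ∨ (F q1 < c ∧ c < F p1))
    (hc2 : (F p2 < c ∧ c < F q2) ∨ (F q2 < c ∧ c < F p2))
    (he : ept F c a b p1 q1 = ept F c a b p2 q2) :
    (p1 = p2 ∧ q1 = q2) ∨ (p1 = q2 ∧ q1 = p2) := by
  obtain ⟨d1, hd1⟩ := adj_exists_dir p1 q1 h1
  obtain ⟨d2, hd2⟩ := adj_exists_dir p2 q2 h2
  have hdd : d1 = d2 := by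
    by_contra hne
    have hcc : coord d2 p1 = coord d2 q1 := by
      by_contra hcn
      exact hne (adj_dir_unique p1 q1 h1 d1 d2 hd1 hcn)
    have e1 : ept F c a b p1 q1 d2 = vpos a b p1 d2 := ept_apply_of_coord_eq d2 hcc
    have e2 := ept_apply_mem_Ioo hab d2 hd2 hc2
    rw [← he, e1] at e2
    rcases vpos_apply_mem (p := p1) (a := a) (b := b) d2 with h | h <;> rw [h] at e2
    · exact lt_irrefl _ e2.1
    · exact lt_irrefl _ e2.2
  subst hdd
  have hk : ∀ k, k ≠ d1 → coord k p1 = coord k p2 ∧ coord k q1 = coord k q2 ∧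
      coord k p1 = coord k q1 := by
    intro k hkne
    have c1 : coord k p1 = coord k q1 := by
      by_contra hcn; exact hkne (adj_dir_unique p1 q1 h1 k d1 hcn hd1)
    have c2 : coord k p2 = coord k q2 := by
      by_contra hcn; exact hkne (adj_dir_unique p2 q2 h2 k d1 hcn hd2)
    have e1 : ept F c a b p1 q1 k = vpos a b p1 k := ept_apply_of_coord_eq k c1
    have e2 : ept F c a b p2 q2 k = vpos a b p2 k := ept_apply_of_coord_eq k c2
    have hv : vpos a b p1 k = vpos a b p2 k := by rw [← e1, ← e2, he]
    have hpp : coord k p1 = coord k p2 := by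
      by_contra hcn; exact vpos_ne hab hcn hv
    exact ⟨hpp, by rw [← c1, ← c2, hpp], c1⟩
  by_cases hdp : coord d1 p1 = coord d1 p2
  · left
    refine ⟨vtx_ext _ _ fun i => ?_, vtx_ext _ _ fun i => ?_⟩
    · by_cases hi : i = d1
      · subst hi; exact hdp
      · exact (hk i hi).1
    · by_cases hi : i = d1
      · subst hi
        exact fin2_eq_of_ne _ _ (coord i p1) (Ne.symm hd1) (by rw [hdp]; exact Ne.symm hd2)
      · exact (hk i hi).2.1
  · right
    refine ⟨vtx_ext _ _ fun i => ?_, vtx_ext _ _ fun i => ?_⟩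
    · by_cases hi : i = d1
      · subst hi; exact fin2_eq_of_ne _ _ (coord i p2) hdp (Ne.symm hd2)
      · exact ((hk i hi).2.2).trans (hk i hi).2.1
    · by_cases hi : i = d1
      · subst hi
        exact fin2_eq_of_ne _ _ (coord i p1) (Ne.symm hd1) (fun h => hdp h.symm)
      · exact ((hk i hi).2.2).symm.trans (hk i hi).1

end Aux

section Main

lemma adj_symm : ∀ p q : Vtx, Adj p q → Adj q p := by decide

variable {F : Vtx → ℝ} {c : ℝ} {a b : Fin 3 → ℝ}

lemma set_ncard_four {α : Type*} {x1 x2 x3 x4 : α} (h12 : x1 ≠ x2) (h13 : x1 ≠ x3)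
    (h14 : x1 ≠ x4) (h23 : x2 ≠ x3) (h24 : x2 ≠ x4) (h34 : x3 ≠ x4) :
    ({x1, x2, x3, x4} : Set α).ncard = 4 := by
  rw [Set.ncard_insert_of_notMem (by simp [h12, h13, h14]),
    Set.ncard_insert_of_notMem (by simp [h23, h24]),
    Set.ncard_insert_of_notMem (by simp [h34]), Set.ncard_singleton]

lemma set_ncard_three {α : Type*} {x1 x2 x3 : α} (h12 : x1 ≠ x2) (h13 : x1 ≠ x3)
    (h23 : x2 ≠ x3) : ({x1, x2, x3} : Set α).ncard = 3 := by
  rw [Set.ncard_insert_of_notMem (by simp [h12, h13]),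
    Set.ncard_insert_of_notMem (by simp [h23]), Set.ncard_singleton]

lemma lface_pts (hab : ∀ i, a i < b i) {s : Finset Vtx} {i : Fin 3} {v : Fin 2}
    (hs : s = Finset.univ.filter (fun p => coord i p = v))
    {p0 q0 r1 r2 : Vtx}
    (hp0 : coord i p0 = v) (hq0 : coord i q0 = v) (hr1 : coord i r1 = v)
    (hr2 : coord i r2 = v)
    (h01 : p0 ≠ q0) (hnadj : ¬ Adj p0 q0)
    (h1p : r1 ≠ p0) (h1q : r1 ≠ q0) (h2p : r2 ≠ p0) (h2q : r2 ≠ q0)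
    (hcls : ∀ u : Vtx, coord i u = v → u = p0 ∨ u = q0 ∨ u = r1 ∨ u = r2)
    (hFp0 : c < F p0) (hFq0 : c < F q0) (hFr1 : F r1 ≤ c) (hFr2 : F r2 ≤ c) :
    isoPtsOnFace F c a b s =
      {ept F c a b r1 p0, ept F c a b r1 q0, ept F c a b r2 p0, ept F c a b r2 q0} := by
  have hmem : ∀ u : Vtx, u ∈ s ↔ coord i u = v := by subst hs; intro u; simp
  have classify : ∀ y z : Vtx, y ∈ s → z ∈ s → F y ≤ c → c < F z →
      (y = r1 ∨ y = r2) ∧ (z = p0 ∨ z = q0) := by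
    intro y z hy hz hyc hzc
    constructor
    · rcases hcls y ((hmem y).mp hy) with h | h | h | h
      · rw [h] at hyc; linarith
      · rw [h] at hyc; linarith
      · exact Or.inl h
      · exact Or.inr h
    · rcases hcls z ((hmem z).mp hz) with h | h | h | h
      · exact Or.inl h
      · exact Or.inr h
      · rw [h] at hzc; linarith
      · rw [h] at hzc; linarith
  ext x
  simp only [isoPtsOnFace, Set.mem_setOf_eq, Set.mem_insert_iff, Set.mem_singleton_iff]
  constructor
  · rintro ⟨u, w, hu, hw, hiso⟩
    rw [iso_iff] at hiso
    obtain ⟨hadj, hcr, hx⟩ := hiso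
    have hne := cross_ne hcr
    rcases hcr with ⟨hu1, hw1⟩ | ⟨hw1, hu1⟩
    · obtain ⟨hy, hz⟩ := classify u w hu hw hu1 hw1
      rcases hy with rfl | rfl <;> rcases hz with rfl | rfl <;> tauto
    · rw [ept_symm hne] at hx
      obtain ⟨hy, hz⟩ := classify w u hw hu hw1 hu1
      rcases hy with rfl | rfl <;> rcases hz with rfl | rfl <;> tauto
  · have a1p : Adj r1 p0 := face_adj_of_diag i v p0 q0 r1 hp0 hq0 hr1 h01 hnadj h1p h1q
    have a1q : Adj r1 q0 := face_adj_of_diag i v q0 p0 r1 hq0 hp0 hr1 (Ne.symm h01)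
      (fun h => hnadj (adj_symm _ _ h)) h1q h1p
    have a2p : Adj r2 p0 := face_adj_of_diag i v p0 q0 r2 hp0 hq0 hr2 h01 hnadj h2p h2q
    have a2q : Adj r2 q0 := face_adj_of_diag i v q0 p0 r2 hq0 hp0 hr2 (Ne.symm h01)
      (fun h => hnadj (adj_symm _ _ h)) h2q h2p
    rintro (h | h | h | h)
    · exact ⟨r1, p0, (hmem r1).mpr hr1, (hmem p0).mpr hp0,
        iso_iff.mpr ⟨a1p, Or.inl ⟨hFr1, hFp0⟩, h⟩⟩
    · exact ⟨r1, q0, (hmem r1).mpr hr1, (hmem q0).mpr hq0,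
        iso_iff.mpr ⟨a1q, Or.inl ⟨hFr1, hFq0⟩, h⟩⟩
    · exact ⟨r2, p0, (hmem r2).mpr hr2, (hmem p0).mpr hp0,
        iso_iff.mpr ⟨a2p, Or.inl ⟨hFr2, hFp0⟩, h⟩⟩
    · exact ⟨r2, q0, (hmem r2).mpr hr2, (hmem q0).mpr hq0,
        iso_iff.mpr ⟨a2q, Or.inl ⟨hFr2, hFq0⟩, h⟩⟩

lemma lface_count4 (hab : ∀ i, a i < b i) {s : Finset Vtx} {i : Fin 3} {v : Fin 2}
    (hs : s = Finset.univ.filter (fun p => coord i p = v))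
    {p0 q0 r1 r2 : Vtx}
    (hp0 : coord i p0 = v) (hq0 : coord i q0 = v) (hr1 : coord i r1 = v)
    (hr2 : coord i r2 = v)
    (h01 : p0 ≠ q0) (hnadj : ¬ Adj p0 q0)
    (h1p : r1 ≠ p0) (h1q : r1 ≠ q0) (h2p : r2 ≠ p0) (h2q : r2 ≠ q0) (h12 : r1 ≠ r2)
    (hcls : ∀ u : Vtx, coord i u = v → u = p0 ∨ u = q0 ∨ u = r1 ∨ u = r2)
    (hFp0 : c < F p0) (hFq0 : c < F q0) (hFr1 : F r1 < c) (hFr2 : F r2 < c) :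
    (isoPtsOnFace F c a b s).ncard = 4 := by
  have a1p : Adj r1 p0 := face_adj_of_diag i v p0 q0 r1 hp0 hq0 hr1 h01 hnadj h1p h1q
  have a1q : Adj r1 q0 := face_adj_of_diag i v q0 p0 r1 hq0 hp0 hr1 (Ne.symm h01)
    (fun h => hnadj (adj_symm _ _ h)) h1q h1p
  have a2p : Adj r2 p0 := face_adj_of_diag i v p0 q0 r2 hp0 hq0 hr2 h01 hnadj h2p h2q
  have a2q : Adj r2 q0 := face_adj_of_diag i v q0 p0 r2 hq0 hp0 hr2 (Ne.symm h01)
    (fun h => hnadj (adj_symm _ _ h)) h2q h2p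
  rw [lface_pts hab hs hp0 hq0 hr1 hr2 h01 hnadj h1p h1q h2p h2q hcls hFp0 hFq0
    hFr1.le hFr2.le]
  have c1p : (F r1 < c ∧ c < F p0) ∨ (F p0 < c ∧ c < F r1) := Or.inl ⟨hFr1, hFp0⟩
  have c1q : (F r1 < c ∧ c < F q0) ∨ (F q0 < c ∧ c < F r1) := Or.inl ⟨hFr1, hFq0⟩
  have c2p : (F r2 < c ∧ c < F p0) ∨ (F p0 < c ∧ c < F r2) := Or.inl ⟨hFr2, hFp0⟩
  have c2q : (F r2 < c ∧ c < F q0) ∨ (F q0 < c ∧ c < F r2) := Or.inl ⟨hFr2, hFq0⟩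
  refine set_ncard_four ?_ ?_ ?_ ?_ ?_ ?_ <;> intro h
  · rcases ept_eq_ept hab a1p a1q c1p c1q h with ⟨-, h2⟩ | ⟨h1, -⟩
    · exact h01 h2
    · exact h1q h1
  · rcases ept_eq_ept hab a1p a2p c1p c2p h with ⟨h1, -⟩ | ⟨h1, -⟩
    · exact h12 h1
    · exact h1p h1
  · rcases ept_eq_ept hab a1p a2q c1p c2q h with ⟨h1, -⟩ | ⟨h1, -⟩
    · exact h12 h1
    · exact h1q h1
  · rcases ept_eq_ept hab a1q a2p c1q c2p h with ⟨h1, -⟩ | ⟨h1, -⟩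
    · exact h12 h1
    · exact h1p h1
  · rcases ept_eq_ept hab a1q a2q c1q c2q h with ⟨h1, -⟩ | ⟨h1, -⟩
    · exact h12 h1
    · exact h1q h1
  · rcases ept_eq_ept hab a2p a2q c2p c2q h with ⟨-, h2⟩ | ⟨h1, -⟩
    · exact h01 h2
    · exact h2q h1

lemma lface_count3 (hab : ∀ i, a i < b i) {s : Finset Vtx} {i : Fin 3} {v : Fin 2}
    (hs : s = Finset.univ.filter (fun p => coord i p = v))
    {p0 q0 r1 r2 : Vtx}
    (hp0 : coord i p0 = v) (hq0 : coord i q0 = v) (hr1 : coord i r1 = v)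
    (hr2 : coord i r2 = v)
    (h01 : p0 ≠ q0) (hnadj : ¬ Adj p0 q0)
    (h1p : r1 ≠ p0) (h1q : r1 ≠ q0) (h2p : r2 ≠ p0) (h2q : r2 ≠ q0) (h12 : r1 ≠ r2)
    (hcls : ∀ u : Vtx, coord i u = v → u = p0 ∨ u = q0 ∨ u = r1 ∨ u = r2)
    (hFp0 : c < F p0) (hFq0 : c < F q0) (hFr1 : F r1 = c) (hFr2 : F r2 < c) :
    (isoPtsOnFace F c a b s).ncard = 3 := by
  have a2p : Adj r2 p0 := face_adj_of_diag i v p0 q0 r2 hp0 hq0 hr2 h01 hnadj h2p h2q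
  have a2q : Adj r2 q0 := face_adj_of_diag i v q0 p0 r2 hq0 hp0 hr2 (Ne.symm h01)
    (fun h => hnadj (adj_symm _ _ h)) h2q h2p
  have c2p : (F r2 < c ∧ c < F p0) ∨ (F p0 < c ∧ c < F r2) := Or.inl ⟨hFr2, hFp0⟩
  have c2q : (F r2 < c ∧ c < F q0) ∨ (F q0 < c ∧ c < F r2) := Or.inl ⟨hFr2, hFq0⟩
  rw [lface_pts hab hs hp0 hq0 hr1 hr2 h01 hnadj h1p h1q h2p h2q hcls hFp0 hFq0
    hFr1.le hFr2.le, ept_of_eq hFr1, ept_of_eq hFr1, Set.insert_idem]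
  refine set_ncard_three ?_ ?_ ?_
  · exact fun h => ept_ne_vpos hab a2p c2p r1 h.symm
  · exact fun h => ept_ne_vpos hab a2q c2q r1 h.symm
  · intro h
    rcases ept_eq_ept hab a2p a2q c2p c2q h with ⟨-, h2⟩ | ⟨h1, -⟩
    · exact h01 h2
    · exact h2q h1

end Main

/-- Iso-point counts on the edges of the various face types: none on an
all-disperse or all-continuous face; exactly one (the iso-node) on a singular face;
exactly two (the two iso-nodes) on a trivial L-face; exactly four on a non-trivial
L-face without iso-node and exactly three on a non-trivial L-face with an iso-node. -/
theorem stmt13 (F : Vtx → ℝ) (c : ℝ) (a b : Fin 3 → ℝ) (hab : ∀ i, a i < b i)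
    (hF : ∀ p, F p ∈ Set.Icc (0:ℝ) 1) (hc : c ∈ Set.Ioo (0:ℝ) 1) :
    (∀ s : Finset Vtx, IsFace s → ((∀ p ∈ s, c < F p) ∨ (∀ p ∈ s, F p ≤ c)) →
      isoPtsOnFace F c a b s = ∅) ∧
    (∀ s : Finset Vtx, IsSingularFace F c s → ∀ p ∈ s, F p = c →
      isoPtsOnFace F c a b s = {vpos a b p}) ∧
    (∀ s : Finset Vtx, IsTrivialLFace F c s → ∀ p ∈ s, ∀ q ∈ s, p ≠ q →
      F p = c → F q = c →
        vpos a b p ≠ vpos a b q ∧ isoPtsOnFace F c a b s = {vpos a b p, vpos a b q}) ∧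
    (∀ s : Finset Vtx, IsLFace F c s → ¬ IsTrivialLFace F c s →
      ((¬ ∃ p ∈ s, F p = c) → (isoPtsOnFace F c a b s).ncard = 4) ∧
      ((∃ p ∈ s, F p = c) → (isoPtsOnFace F c a b s).ncard = 3)) := by
  refine ⟨?_, ?_, ?_, ?_⟩
  -- Part 1 : all-disperse or all-continuous face
  · rintro s - hall
    ext x
    simp only [isoPtsOnFace, Set.mem_setOf_eq, Set.mem_empty_iff_false, iff_false]
    rintro ⟨p, q, hp, hq, -, hcr, -⟩
    rcases hall with h | h
    · rcases hcr with ⟨h1, -⟩ | ⟨h1, -⟩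
      · linarith [h p hp]
      · linarith [h q hq]
    · rcases hcr with ⟨-, h2⟩ | ⟨-, h2⟩
      · linarith [h q hq]
      · linarith [h p hp]
  -- Part 2 : singular face
  · rintro s ⟨⟨i, v, hs⟩, p', hp', hFp', hsing⟩ p hp hFp
    have hpp : p = p' := by
      by_contra hne
      exact absurd hFp (ne_of_gt (hsing p hp hne))
    subst hpp
    have hmem : ∀ u : Vtx, u ∈ s ↔ coord i u = v := by subst hs; intro u; simp
    ext x
    simp only [isoPtsOnFace, Set.mem_setOf_eq, Set.mem_singleton_iff]
    constructor
    · rintro ⟨u, w, hu, hw, hiso⟩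
      rw [iso_iff] at hiso
      obtain ⟨hadj, hcr, hx⟩ := hiso
      have hne := cross_ne hcr
      rcases hcr with ⟨h1, h2⟩ | ⟨h1, h2⟩
      · have hup : u = p := by
          by_contra hn; linarith [hsing u hu hn]
        subst hup
        rw [hx, ept_of_eq hFp]
      · have hwp : w = p := by
          by_contra hn; linarith [hsing w hw hn]
        subst hwp
        rw [hx, ept_symm hne, ept_of_eq hFp]
    · intro hx
      obtain ⟨q, hq, hqp, hadj⟩ := face_adj_exists i v p ((hmem p).mp hp)
      exact ⟨p, q, hp, (hmem q).mpr hq,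
        iso_iff.mpr ⟨hadj, Or.inl ⟨le_of_eq hFp, hsing q ((hmem q).mpr hq) hqp⟩,
          by rw [hx, ept_of_eq hFp]⟩⟩
  -- Part 3 : trivial L-face
  · rintro s ⟨⟨⟨i, v, hs⟩, p0, q0, hp0s, hq0s, h01, hFp0, hFq0, hnadj, hle⟩, htriv⟩
      p hp q hq hpq hFp hFq
    have hmem : ∀ u : Vtx, u ∈ s ↔ coord i u = v := by subst hs; intro u; simp
    refine ⟨vpos_ne_fun hab hpq, ?_⟩
    obtain ⟨r1, r2, hr1, hr2, h12, h1p, h1q, h2p, h2q, hcls⟩ :=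
      face_other_two i v p0 q0 ((hmem p0).mp hp0s) ((hmem q0).mp hq0s) h01 hnadj
    have hFr1 : F r1 = c :=
      htriv r1 ((hmem r1).mpr hr1) (hle r1 ((hmem r1).mpr hr1) h1p h1q)
    have hFr2 : F r2 = c :=
      htriv r2 ((hmem r2).mpr hr2) (hle r2 ((hmem r2).mpr hr2) h2p h2q)
    have hset : isoPtsOnFace F c a b s = {vpos a b r1, vpos a b r2} := by
      rw [lface_pts hab hs ((hmem p0).mp hp0s) ((hmem q0).mp hq0s) hr1 hr2 h01 hnadj
        h1p h1q h2p h2q hcls hFp0 hFq0 hFr1.le hFr2.le,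
        ept_of_eq hFr1, ept_of_eq hFr1, ept_of_eq hFr2, ept_of_eq hFr2, Set.insert_idem]
      ext y; simp only [Set.mem_insert_iff, Set.mem_singleton_iff]; tauto
    have hpc : p = r1 ∨ p = r2 := by
      rcases hcls p ((hmem p).mp hp) with h | h | h | h
      · rw [h] at hFp; linarith
      · rw [h] at hFp; linarith
      · exact Or.inl h
      · exact Or.inr h
    have hqc : q = r1 ∨ q = r2 := by
      rcases hcls q ((hmem q).mp hq) with h | h | h | h
      · rw [h] at hFq; linarith
      · rw [h] at hFq; linarith
      · exact Or.inl h
      · exact Or.inr h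
    rcases hpc with rfl | rfl <;> rcases hqc with rfl | rfl
    · exact absurd rfl hpq
    · exact hset
    · rw [hset, Set.pair_comm]
    · exact absurd rfl hpq
  -- Part 4 : non-trivial L-face
  · rintro s hL hnt
    obtain ⟨⟨i, v, hs⟩, p0, q0, hp0s, hq0s, h01, hFp0, hFq0, hnadj, hle⟩ := hL
    have hmem : ∀ u : Vtx, u ∈ s ↔ coord i u = v := by subst hs; intro u; simp
    obtain ⟨r1, r2, hr1, hr2, h12, h1p, h1q, h2p, h2q, hcls⟩ :=
      face_other_two i v p0 q0 ((hmem p0).mp hp0s) ((hmem q0).mp hq0s) h01 hnadj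
    have hFr1 : F r1 ≤ c := hle r1 ((hmem r1).mpr hr1) h1p h1q
    have hFr2 : F r2 ≤ c := hle r2 ((hmem r2).mpr hr2) h2p h2q
    constructor
    · intro hno
      have h1 : F r1 < c :=
        lt_of_le_of_ne hFr1 (fun h => hno ⟨r1, (hmem r1).mpr hr1, h⟩)
      have h2 : F r2 < c :=
        lt_of_le_of_ne hFr2 (fun h => hno ⟨r2, (hmem r2).mpr hr2, h⟩)
      exact lface_count4 hab hs ((hmem p0).mp hp0s) ((hmem q0).mp hq0s) hr1 hr2 h01
        hnadj h1p h1q h2p h2q h12 hcls hFp0 hFq0 h1 h2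
    · rintro ⟨piso, hpiso, hFpiso⟩
      have hnt' : ∃ r, r ∈ s ∧ F r ≤ c ∧ F r ≠ c := by
        by_contra h
        push_neg at h
        exact hnt ⟨⟨⟨i, v, hs⟩, p0, q0, hp0s, hq0s, h01, hFp0, hFq0, hnadj, hle⟩,
          fun r hr hrle => h r hr hrle⟩
      obtain ⟨r0, hr0, hr0le, hr0ne⟩ := hnt'
      have hr0lt : F r0 < c := lt_of_le_of_ne hr0le hr0ne
      have hr0c : r0 = r1 ∨ r0 = r2 := by
        rcases hcls r0 ((hmem r0).mp hr0) with h | h | h | h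
        · rw [h] at hr0lt; linarith
        · rw [h] at hr0lt; linarith
        · exact Or.inl h
        · exact Or.inr h
      have hpc : piso = r1 ∨ piso = r2 := by
        rcases hcls piso ((hmem piso).mp hpiso) with h | h | h | h
        · rw [h] at hFpiso; linarith
        · rw [h] at hFpiso; linarith
        · exact Or.inl h
        · exact Or.inr h
      have hcls' : ∀ u : Vtx, coord i u = v → u = p0 ∨ u = q0 ∨ u = r2 ∨ u = r1 := by
        intro u hu; rcases hcls u hu with h | h | h | h <;> tauto
      rcases hpc with rfl | rfl
      · have h2lt : F r2 < c := by
          rcases hr0c with rfl | rfl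
          · exact absurd hFpiso hr0ne
          · exact hr0lt
        exact lface_count3 hab hs ((hmem p0).mp hp0s) ((hmem q0).mp hq0s) hr1 hr2 h01
          hnadj h1p h1q h2p h2q h12 hcls hFp0 hFq0 hFpiso h2lt
      · have h1lt : F r1 < c := by
          rcases hr0c with rfl | rfl
          · exact hr0lt
          · exact absurd hFpiso hr0ne
        exact lface_count3 hab hs ((hmem p0).mp hp0s) ((hmem q0).mp hq0s) hr2 hr1 h01
          hnadj h2p h2q h1p h1q (Ne.symm h12) hcls' hFp0 hFq0 hFpiso h1lt
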